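/- Let B(u,v) := v − 1/u, defined on the domain 𝒟 := {(u,v) ∈ ℝ² : u > 0, v > 0, uv ≥ 1}. Then 0 ≤ B(u,v) ≤ v on 𝒟, and there is an absolute constant C > 0 such that for all x = (u,v), x₊ = (u₊,v₊), x₋ = (u₋,v₋) in 𝒟 with x = (x₊ + x₋)/2, one has B(x) − (B(x₊) + B(x₋))/2 ≥ C · (u₊ − u₋)²/u³. -/
import Mathlib


noncomputable section

/-- The Bellman function `B(u,v) = v − 1/u`. -/
def bellman5 (u v : ℝ) : ℝ := v - u⁻¹

/-- The domain `𝒟 = {(u,v) : u > 0, v > 0, uv ≥ 1}`. -/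
def memD2 (u v : ℝ) : Prop := 0 < u ∧ 0 < v ∧ 1 ≤ u * v

/-- The Bellman function `B(u,v) = v − 1/u` satisfies `0 ≤ B ≤ v` on `𝒟`, and there is an
absolute `C > 0` such that midpoint convexity holds:
`B(x) − (B(x₊)+B(x₋))/2 ≥ C (u₊ − u₋)²/u³` for all `x = (x₊ + x₋)/2` in `𝒟`. -/
theorem bellman5_properties :
    (∀ u v : ℝ, memD2 u v → 0 ≤ bellman5 u v ∧ bellman5 u v ≤ v) ∧
    (∃ C : ℝ, 0 < C ∧ ∀ u v up vp um vm : ℝ,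
      memD2 u v → memD2 up vp → memD2 um vm →
      u = (up + um) / 2 → v = (vp + vm) / 2 →
      bellman5 u v - (bellman5 up vp + bellman5 um vm) / 2
        ≥ C * (up - um) ^ 2 / u ^ 3) := by
  constructor
  · rintro u v ⟨hu, hv, huv⟩
    unfold bellman5
    constructor
    · have : u⁻¹ ≤ v := by
        rw [inv_le_iff_one_le_mul₀ hu]
        linarith [huv]
      linarith
    · have : 0 < u⁻¹ := inv_pos.mpr hu
      linarith
  · refine ⟨1/4, by norm_num, ?_⟩
    rintro u v up vp um vm ⟨hu, hv, _⟩ ⟨hup, hvp, _⟩ ⟨hum, hvm, _⟩ hU hV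
    unfold bellman5
    rw [ge_iff_le, div_le_iff₀ (by positivity), hV]
    have h1 : u⁻¹ = 1 / u := by ring
    have h2 : up⁻¹ = 1 / up := by ring
    have h3 : um⁻¹ = 1 / um := by ring
    rw [h1, h2, h3]
    have heq : (vp + vm) / 2 - 1 / u - (vp - 1 / up + (vm - 1 / um)) / 2
        = (up - um) ^ 2 / (4 * u * up * um) := by
      subst hU
      field_simp
      ring
    rw [heq]
    have h5 : (up - um) ^ 2 / (4 * u * up * um) * u ^ 3
        = (up - um) ^ 2 * u ^ 3 / (4 * u * up * um) := by ring
    rw [h5, le_div_iff₀ (by positivity : (0:ℝ) < 4 * u * up * um)]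
    have hupum : up * um ≤ u ^ 2 := by nlinarith [sq_nonneg (up - um)]
    have h4 := mul_le_mul_of_nonneg_left hupum
      (mul_nonneg (sq_nonneg (up - um)) hu.le)
    nlinarith [h4]
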